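/- arXiv:2105.08332 — 3 statements merged into one kernel-verified Lean document; each statement's English description precedes it below -/
import Mathlib

section
/- Let N ≥ 1, B an N×N skew-symmetric integer matrix, k ∈ I and ε ∈ {+1,−1}. Then E_{k,ε}(B) · B · E_{k,ε}(B)ᵀ = μ_k(B); that is, the signed seed mutation intertwines the skew-symmetric form given by B with the one given by the mutated matrix μ_k(B). -/
open Matrix

/-- The mutated exchange matrix `μ_k(B)`. -/
def mutB {N : ℕ} (B : Matrix (Fin N) (Fin N) ℤ) (k : Fin N) :
    Matrix (Fin N) (Fin N) ℤ :=
  Matrix.of fun i j =>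
    if i = k ∨ j = k then -B i j
    else B i j + max (B i k) 0 * max (B k j) 0 - max (-B i k) 0 * max (-B k j) 0

/-- The matrix `E_{k,ε}(B)` of the signed seed mutation. -/
def EmatE {N : ℕ} (B : Matrix (Fin N) (Fin N) ℤ) (k : Fin N) (ε : ℤ) :
    Matrix (Fin N) (Fin N) ℤ :=
  Matrix.of fun i j =>
    if i = j then (if i = k then -1 else 1)
    else if j = k then max (ε * B i k) 0 else 0

lemma Erow {N : ℕ} (B : Matrix (Fin N) (Fin N) ℤ) (k ε : _) (i : Fin N) (f : Fin N → ℤ) :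
    ∑ p, EmatE B k ε i p * f p =
      (if i = k then (-1 : ℤ) else 1) * f i
        + (if i = k then 0 else max (ε * B i k) 0) * f k := by
  have h : ∀ p, EmatE B k ε i p =
      (if p = i then (if i = k then (-1 : ℤ) else 1) else 0)
        + (if p = k then (if i = k then 0 else max (ε * B i k) 0) else 0) := by
    intro p
    simp only [EmatE, Matrix.of_apply]
    split_ifs <;> simp_all
  simp only [h, add_mul, Finset.sum_add_distrib, ite_mul, zero_mul,
    Finset.sum_ite_eq', Finset.mem_univ, if_true]

/-- The signed seed mutation intertwines the skew-symmetric form given by `B` with the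
one given by the mutated matrix `μ_k(B)`:  `E_{k,ε}(B) · B · E_{k,ε}(B)ᵀ = μ_k(B)`. -/
theorem signed_mutation_intertwines (N : ℕ) (hN : 1 ≤ N)
    (B : Matrix (Fin N) (Fin N) ℤ) (hskew : ∀ i j, B j i = -B i j)
    (k : Fin N) (ε : ℤ) (hε : ε = 1 ∨ ε = -1) :
    EmatE B k ε * B * (EmatE B k ε)ᵀ = mutB B k := by
  have hkk : B k k = 0 := by have := hskew k k; omega
  ext i j
  rw [Matrix.mul_apply]
  have step : ∀ q, (EmatE B k ε * B) i q * (EmatE B k ε)ᵀ q j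
      = EmatE B k ε j q * (EmatE B k ε * B) i q := by
    intro q; rw [Matrix.transpose_apply, mul_comm]
  rw [Finset.sum_congr rfl fun q _ => step q, Erow]
  rw [Matrix.mul_apply, Matrix.mul_apply, Erow, Erow]
  simp only [mutB, Matrix.of_apply]
  have hbkj : B k j = -B j k := hskew j k
  by_cases hi : i = k <;> by_cases hj : j = k <;>
    simp [hi, hj, hkk, hbkj]
  · rcases hε with rfl | rfl <;>
      rcases le_total (B i k) 0 with h1 | h1 <;>
      rcases le_total (B j k) 0 with h2 | h2 <;>
      simp [max_eq_left, max_eq_right, h1, h2, neg_nonneg.mpr, neg_nonpos.mpr,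
        max_eq_left_iff, max_eq_right_iff] <;> nlinarith [h1, h2]
end

section
/- Let N ≥ 1, B an N×N skew-symmetric integer matrix, k ∈ I and ε ∈ {+1,−1}. For w ∈ ℝ^N define μ^#_{k,ε}(w) ∈ ℝ^N by (μ^#_{k,ε}(w))_i = w_i − b_{ik}·min(0, ε·w_k) for all i ∈ I. Then for every w ∈ ℝ^N, the vector E_{k,ε}(B)·μ^#_{k,ε}(w) (matrix–vector multiplication over ℝ) has k-th coordinate equal to −w_k and, for every i ≠ k, i-th coordinate equal to w_i + [sgn(w_k)·b_{ik}]_+ · w_k. In particular this composite map is independent of the choice of the sign ε. -/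
open Matrix

/-- The real matrix `E_{k,ε}(B)` of the signed seed mutation. -/
noncomputable def EmatR {N : ℕ} (B : Matrix (Fin N) (Fin N) ℤ) (k : Fin N) (ε : ℝ) :
    Matrix (Fin N) (Fin N) ℝ :=
  Matrix.of fun i j =>
    if i = j then (if i = k then -1 else 1)
    else if j = k then max (ε * (B i k : ℝ)) 0 else 0

/-- The piecewise-linear map `μ^#_{k,ε}` on `ℝ^N`:
`(μ^#_{k,ε}(w))_i = w_i − b_{ik}·min(0, ε·w_k)`. -/
noncomputable def muSharp {N : ℕ} (B : Matrix (Fin N) (Fin N) ℤ) (k : Fin N) (ε : ℝ)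
    (w : Fin N → ℝ) : Fin N → ℝ :=
  fun i => w i - (B i k : ℝ) * min 0 (ε * w k)

lemma key_aux (b wk ε : ℝ) (hε : ε = 1 ∨ ε = -1) :
    -(b * min 0 (ε * wk)) + max (ε * b) 0 * wk = max (Real.sign wk * b) 0 * wk := by
  rcases hε with rfl | rfl <;> rw [Real.sign] <;>
    simp only [min_def, max_def] <;> split_ifs <;> nlinarith

/-- The composite `E_{k,ε}(B) · μ^#_{k,ε}(w)` has `k`-th coordinate `−w_k` and, for `i ≠ k`,
`i`-th coordinate `w_i + [sgn(w_k)·b_{ik}]_+ · w_k`; in particular it is independent of `ε`. -/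
theorem Emat_mulVec_muSharp (N : ℕ) (hN : 1 ≤ N)
    (B : Matrix (Fin N) (Fin N) ℤ) (hskew : ∀ i j, B j i = -B i j)
    (k : Fin N) (ε : ℝ) (hε : ε = 1 ∨ ε = -1) (w : Fin N → ℝ) :
    ((EmatR B k ε).mulVec (muSharp B k ε w)) k = -w k ∧
    ∀ i, i ≠ k →
      ((EmatR B k ε).mulVec (muSharp B k ε w)) i
        = w i + max (Real.sign (w k) * (B i k : ℝ)) 0 * w k := by
  have hBkk : B k k = 0 := by have := hskew k k; omega
  have hmuk : muSharp B k ε w k = w k := by simp [muSharp, hBkk]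
  constructor
  · have h1 : ((EmatR B k ε).mulVec (muSharp B k ε w)) k
        = ∑ j, EmatR B k ε k j * muSharp B k ε w j := rfl
    rw [h1, Finset.sum_eq_single k]
    · simp [EmatR, hmuk]
    · intro j _ hj
      simp [EmatR, Ne.symm hj, hj]
    · simp
  · intro i hi
    have h1 : ((EmatR B k ε).mulVec (muSharp B k ε w)) i
        = ∑ j, EmatR B k ε i j * muSharp B k ε w j := rfl
    have h2 : ∑ j, EmatR B k ε i j * muSharp B k ε w j
        = ∑ j ∈ ({i, k} : Finset (Fin N)), EmatR B k ε i j * muSharp B k ε w j := by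
      refine (Finset.sum_subset (Finset.subset_univ _) ?_).symm
      intro j _ hj
      simp only [Finset.mem_insert, Finset.mem_singleton, not_or] at hj
      simp [EmatR, Ne.symm hj.1, hj.2]
    rw [h1, h2, Finset.sum_pair hi]
    have hEii : EmatR B k ε i i = 1 := by simp [EmatR, hi]
    have hEik : EmatR B k ε i k = max (ε * (B i k : ℝ)) 0 := by simp [EmatR, hi]
    rw [hEii, hEik, hmuk]
    have := key_aux (B i k : ℝ) (w k) ε hε
    simp only [muSharp]
    linarith
end

section
/- Let γ be a path as in the path setup which is fully-mutating, i.e. {k_0,…,k_{h−1}} = I. Let ε ∈ {+1,−1}^h be a strict sign, let U := {w ∈ ℝ^N : ε_ν · (μ_{γ≤ν}(w))_{k_ν} > 0 for all ν = 0,…,h−1}, suppose U ≠ ∅, and let C^ε_γ be the closure of U. Then C^ε_γ is a rationally polyhedral cone (it is the intersection of finitely many closed half-spaces {w ∈ ℝ^N : ⟨a, w⟩ ≥ 0} with a ∈ ℚ^N) and it is strictly convex: C^ε_γ ∩ (−C^ε_γ) = {0}. -/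
open Matrix Filter Topology

/-- The tropical cluster `X`-transformation `μ_k^B : ℝ^N → ℝ^N`. -/
noncomputable def tropX {N : ℕ} (B : Matrix (Fin N) (Fin N) ℤ) (k : Fin N)
    (w : Fin N → ℝ) : Fin N → ℝ :=
  fun i => if i = k then -w k
    else w i + max (Real.sign (w k) * (B i k : ℝ)) 0 * w k

/-- The sequence of exchange matrices `B_ν` along the path with mutation directions `ks`. -/
def Bseq {N : ℕ} (B0 : Matrix (Fin N) (Fin N) ℤ) (ks : ℕ → Fin N) :
    ℕ → Matrix (Fin N) (Fin N) ℤ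
  | 0 => B0
  | ν + 1 => mutB (Bseq B0 ks ν) (ks ν)

/-- The partial tropical cluster transformation `μ_{γ≤ν} = μ_{k_{ν−1}} ∘ ⋯ ∘ μ_{k_0}`. -/
noncomputable def muIter {N : ℕ} (B0 : Matrix (Fin N) (Fin N) ℤ) (ks : ℕ → Fin N) :
    ℕ → (Fin N → ℝ) → Fin N → ℝ
  | 0 => fun w => w
  | ν + 1 => fun w => tropX (Bseq B0 ks ν) (ks ν) (muIter B0 ks ν w)

/-- The `ν`-th entry of the sign `ε_γ(w)` of the path at `w`. -/
noncomputable def signSeq {N : ℕ} (B0 : Matrix (Fin N) (Fin N) ℤ) (ks : ℕ → Fin N)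
    (w : Fin N → ℝ) (ν : ℕ) : ℝ :=
  Real.sign (muIter B0 ks ν w (ks ν))

/-- The product `E_{γ≤ν,ε} = E_{k_{ν−1},ε_{ν−1}}(B_{ν−1}) ⋯ E_{k_0,ε_0}(B_0)`. -/
noncomputable def Eprod {N : ℕ} (B0 : Matrix (Fin N) (Fin N) ℤ) (ks : ℕ → Fin N)
    (ε : ℕ → ℝ) : ℕ → Matrix (Fin N) (Fin N) ℝ
  | 0 => 1
  | ν + 1 => EmatR (Bseq B0 ks ν) (ks ν) (ε ν) * Eprod B0 ks ε ν

/-- The permutation matrix `P_σ`, acting by `(P_σ w)_{σ(i)} = w_i`. -/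
def permMat {N : ℕ} (σ : Equiv.Perm (Fin N)) : Matrix (Fin N) (Fin N) ℝ :=
  Matrix.of fun i j => if i = σ j then 1 else 0

/-- The mutation loop transformation `φ = P_σ ∘ μ_γ` for a path of length `h`. -/
noncomputable def phiMap {N : ℕ} (B0 : Matrix (Fin N) (Fin N) ℤ) (ks : ℕ → Fin N)
    (h : ℕ) (σ : Equiv.Perm (Fin N)) (w : Fin N → ℝ) : Fin N → ℝ :=
  (permMat σ).mulVec (muIter B0 ks h w)

lemma EmatR_mulVec {N : ℕ} (B : Matrix (Fin N) (Fin N) ℤ) (k : Fin N) (e : ℝ)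
    (w : Fin N → ℝ) :
    (EmatR B k e).mulVec w = fun i => if i = k then -w k
      else w i + max (e * (B i k : ℝ)) 0 * w k := by
  funext i
  show ∑ j, EmatR B k e i j * w j = _
  by_cases hik : i = k
  · subst hik
    rw [if_pos rfl, Finset.sum_eq_single i]
    · simp [EmatR]
    · intro j _ hj
      simp [EmatR, hj, Ne.symm hj]
    · simp
  · rw [if_neg hik]
    have : ∀ j, EmatR B k e i j * w j =
        (if j = i then w i else 0) + (if j = k then max (e * (B i k : ℝ)) 0 * w k else 0) := by
      intro j
      by_cases hji : j = i
      · subst hji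
        simp [EmatR, hik]
      · by_cases hjk : j = k
        · subst hjk
          simp [EmatR, hji, Ne.symm hji, hik]
        · simp [EmatR, hji, Ne.symm hji, hjk]
    rw [Finset.sum_congr rfl (fun j _ => this j), Finset.sum_add_distrib]
    simp

lemma tropX_eq_EmatR {N : ℕ} (B : Matrix (Fin N) (Fin N) ℤ) (k : Fin N) (e : ℝ)
    (he : e = 1 ∨ e = -1) (w : Fin N → ℝ) (hw : 0 ≤ e * w k) :
    tropX B k w = (EmatR B k e).mulVec w := by
  rw [EmatR_mulVec]
  funext i
  unfold tropX
  by_cases hik : i = k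
  · simp [hik]
  · rw [if_neg hik, if_neg hik]
    rcases eq_or_ne (w k) 0 with h0 | h0
    · simp [h0]
    · have hs : Real.sign (w k) = e := by
        rcases he with he | he <;> subst he
        · rw [one_mul] at hw
          exact Real.sign_of_pos (lt_of_le_of_ne hw (Ne.symm h0))
        · have : w k < 0 := by
            rcases lt_or_gt_of_ne h0 with h | h
            · exact h
            · nlinarith
          rw [Real.sign_of_neg this]
      rw [hs]

lemma muIter_succ_of_zero {N : ℕ} (B0 : Matrix (Fin N) (Fin N) ℤ) (ks : ℕ → Fin N)
    (ν : ℕ) (w : Fin N → ℝ) (h0 : muIter B0 ks ν w (ks ν) = 0) :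
    muIter B0 ks (ν + 1) w = muIter B0 ks ν w := by
  show tropX _ _ _ = _
  funext i
  unfold tropX
  by_cases hik : i = ks ν <;> simp [hik, h0]

lemma muIter_eq_Eprod {N : ℕ} (B0 : Matrix (Fin N) (Fin N) ℤ) (ks : ℕ → Fin N)
    (ε : ℕ → ℝ) (w : Fin N → ℝ) (ν : ℕ)
    (hε : ∀ ν' < ν, ε ν' = 1 ∨ ε ν' = -1)
    (hw : ∀ ν' < ν, 0 ≤ ε ν' * (Eprod B0 ks ε ν').mulVec w (ks ν')) :
    muIter B0 ks ν w = (Eprod B0 ks ε ν).mulVec w := by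
  induction ν with
  | zero => show w = (1 : Matrix (Fin N) (Fin N) ℝ).mulVec w; rw [Matrix.one_mulVec]
  | succ ν ih =>
    have hprev := ih (fun ν' h => hε ν' (h.trans (Nat.lt_succ_self ν)))
      (fun ν' h => hw ν' (h.trans (Nat.lt_succ_self ν)))
    show tropX _ _ (muIter B0 ks ν w) = _
    have hcond : 0 ≤ ε ν * (Eprod B0 ks ε ν).mulVec w (ks ν) := hw ν (Nat.lt_succ_self ν)
    rw [hprev, tropX_eq_EmatR _ _ (ε ν) (hε ν (Nat.lt_succ_self ν)) _ hcond,
      Matrix.mulVec_mulVec]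
    rfl

lemma muIter_eq_Eprod' {N : ℕ} (B0 : Matrix (Fin N) (Fin N) ℤ) (ks : ℕ → Fin N)
    (ε : ℕ → ℝ) (w : Fin N → ℝ) (ν : ℕ)
    (hε : ∀ ν' < ν, ε ν' = 1 ∨ ε ν' = -1)
    (hw : ∀ ν' < ν, 0 ≤ ε ν' * muIter B0 ks ν' w (ks ν')) :
    muIter B0 ks ν w = (Eprod B0 ks ε ν).mulVec w := by
  induction ν using Nat.strong_induction_on with
  | _ ν ih =>
    apply muIter_eq_Eprod _ _ _ _ _ hε
    intro ν' hν'
    rw [← ih ν' hν' (fun a ha => hε a (ha.trans hν')) (fun a ha => hw a (ha.trans hν'))]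
    exact hw ν' hν'

def EmatQ {N : ℕ} (B : Matrix (Fin N) (Fin N) ℤ) (k : Fin N) (e : ℚ) :
    Matrix (Fin N) (Fin N) ℚ :=
  Matrix.of fun i j =>
    if i = j then (if i = k then -1 else 1)
    else if j = k then max (e * (B i k : ℚ)) 0 else 0

def EprodQ {N : ℕ} (B0 : Matrix (Fin N) (Fin N) ℤ) (ks : ℕ → Fin N)
    (e : ℕ → ℚ) : ℕ → Matrix (Fin N) (Fin N) ℚ
  | 0 => 1
  | ν + 1 => EmatQ (Bseq B0 ks ν) (ks ν) (e ν) * EprodQ B0 ks e ν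

lemma EprodQ_cast {N : ℕ} (B0 : Matrix (Fin N) (Fin N) ℤ) (ks : ℕ → Fin N)
    (e : ℕ → ℚ) (ε : ℕ → ℝ) (ν : ℕ) (h : ∀ ν' < ν, (e ν' : ℝ) = ε ν') :
    (EprodQ B0 ks e ν).map ((↑) : ℚ → ℝ) = Eprod B0 ks ε ν := by
  induction ν with
  | zero =>
    show (1 : Matrix (Fin N) (Fin N) ℚ).map _ = (1 : Matrix (Fin N) (Fin N) ℝ)
    ext i j
    by_cases hij : i = j <;> simp [Matrix.one_apply, hij]
  | succ ν ih =>
    show ((EmatQ _ _ _ * EprodQ _ _ _ ν).map ((Rat.castHom ℝ) : ℚ →+* ℝ)) = _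
    rw [Matrix.map_mul]
    simp only [Rat.coe_castHom]
    rw [ih (fun a ha => h a (ha.trans (Nat.lt_succ_self ν)))]
    congr 1
    ext i j
    have he : (e ν : ℝ) = ε ν := h ν (Nat.lt_succ_self ν)
    simp only [EmatQ, EmatR, Matrix.map_apply, Matrix.of_apply]
    split_ifs <;> push_cast [Rat.cast_max, he] <;> try rfl

/-- If `γ` is fully-mutating and `ε` is a strict sign with nonempty sign-cone interior
`U = {w : ε_ν·(μ_{γ≤ν}(w))_{k_ν} > 0 ∀ν}`, then `C^ε_γ := closure U` is a rationally
polyhedral cone (an intersection of finitely many rational closed half-spaces) and is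
strictly convex: `C^ε_γ ∩ (−C^ε_γ) = {0}`. -/
theorem signCone_rationally_polyhedral_strictly_convex (N h : ℕ) (hN : 1 ≤ N)
    (B0 : Matrix (Fin N) (Fin N) ℤ) (hskew : ∀ i j, B0 j i = -B0 i j)
    (ks : ℕ → Fin N) (hfull : ∀ i : Fin N, ∃ ν < h, ks ν = i)
    (ε : ℕ → ℝ) (hε : ∀ ν < h, ε ν = 1 ∨ ε ν = -1)
    (hU : Set.Nonempty {w : Fin N → ℝ | ∀ ν < h, 0 < ε ν * muIter B0 ks ν w (ks ν)}) :
    (∃ (m : ℕ) (a : Fin m → Fin N → ℚ),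
      closure {w : Fin N → ℝ | ∀ ν < h, 0 < ε ν * muIter B0 ks ν w (ks ν)} =
        ⋂ l : Fin m, {w : Fin N → ℝ | 0 ≤ ∑ i, (a l i : ℝ) * w i}) ∧
    closure {w : Fin N → ℝ | ∀ ν < h, 0 < ε ν * muIter B0 ks ν w (ks ν)} ∩
      (-closure {w : Fin N → ℝ | ∀ ν < h, 0 < ε ν * muIter B0 ks ν w (ks ν)}) = {0} := by
  classical
  set U := {w : Fin N → ℝ | ∀ ν < h, 0 < ε ν * muIter B0 ks ν w (ks ν)} with hUdef
  set εq : ℕ → ℚ := fun ν => if ε ν = 1 then 1 else -1 with hεq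
  have hcastε : ∀ ν < h, ((εq ν : ℚ) : ℝ) = ε ν := by
    intro ν hν
    rcases hε ν hν with h1 | h1 <;> simp [hεq, h1] <;> norm_num
  set S := {w : Fin N → ℝ | ∀ ν < h, 0 ≤ ε ν * (Eprod B0 ks ε ν).mulVec w (ks ν)}
    with hSdef
  have hUS : U ⊆ S := by
    intro w hw ν hν
    rw [← muIter_eq_Eprod' B0 ks ε w ν (fun a ha => hε a (ha.trans hν))
      (fun a ha => (hw a (ha.trans hν)).le)]
    exact (hw ν hν).le
  have hSclosed : IsClosed S := by
    have hrw : S = ⋂ ν, ⋂ (_ : ν < h),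
        {w : Fin N → ℝ | 0 ≤ ε ν * (Eprod B0 ks ε ν).mulVec w (ks ν)} := by
      ext w; simp [hSdef, Set.mem_iInter]
    rw [hrw]
    refine isClosed_iInter fun ν => isClosed_iInter fun hν => ?_
    have hcont : Continuous fun w : Fin N → ℝ =>
        ε ν * (Eprod B0 ks ε ν).mulVec w (ks ν) := by
      have : Continuous fun w : Fin N → ℝ => (Eprod B0 ks ε ν).mulVec w (ks ν) := by
        simp only [Matrix.mulVec, dotProduct]
        exact continuous_finset_sum _ fun j _ => continuous_const.mul (continuous_apply j)
      exact continuous_const.mul this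
    exact isClosed_le continuous_const hcont
  have hclosureUS : closure U = S := by
    apply Set.Subset.antisymm
    · exact closure_minimal hUS hSclosed
    · obtain ⟨w0, hw0⟩ := hU
      intro w hw
      have hw0E : ∀ ν < h, 0 < ε ν * (Eprod B0 ks ε ν).mulVec w0 (ks ν) := by
        intro ν hν
        rw [← muIter_eq_Eprod' B0 ks ε w0 ν (fun a ha => hε a (ha.trans hν))
          (fun a ha => (hw0 a (ha.trans hν)).le)]
        exact hw0 ν hν
      have hmem : ∀ t : ℝ, 0 < t → w + t • w0 ∈ U := by
        intro t ht ν hν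
        have hE : ∀ ν' < h, 0 < ε ν' * (Eprod B0 ks ε ν').mulVec (w + t • w0) (ks ν') := by
          intro ν' hν'
          rw [Matrix.mulVec_add, Matrix.mulVec_smul]
          have h1 := hw ν' hν'
          have h2 := hw0E ν' hν'
          simp only [Pi.add_apply, Pi.smul_apply, smul_eq_mul]
          nlinarith [mul_pos ht h2]
        show 0 < ε ν * muIter B0 ks ν (w + t • w0) (ks ν)
        rw [muIter_eq_Eprod B0 ks ε _ ν (fun a ha => hε a (ha.trans hν))
          (fun a ha => (hE a (ha.trans hν)).le)]
        exact hE ν hν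
      have htend : Tendsto (fun n : ℕ => w + (1 / (n + 1 : ℝ)) • w0) atTop (𝓝 w) := by
        have h1 : Tendsto (fun n : ℕ => (1 / (n + 1 : ℝ))) atTop (𝓝 0) :=
          tendsto_one_div_add_atTop_nhds_zero_nat
        have h2 := h1.smul_const w0
        rw [zero_smul] at h2
        have h3 : Tendsto (fun n : ℕ => w + (1 / (n + 1 : ℝ)) • w0) atTop (𝓝 (w + 0)) :=
          Tendsto.add tendsto_const_nhds h2
        rw [add_zero] at h3
        exact h3
      exact mem_closure_of_tendsto htend (Filter.Eventually.of_forall fun n =>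
        hmem _ (by positivity))
  set a : Fin h → Fin N → ℚ := fun l i => εq l * EprodQ B0 ks εq l (ks l) i with hadef
  have hhalf : ∀ (l : Fin h) (w : Fin N → ℝ),
      (∑ i, (a l i : ℝ) * w i) = ε l * (Eprod B0 ks ε l).mulVec w (ks l) := by
    intro l w
    have hcast : (EprodQ B0 ks εq l).map ((↑) : ℚ → ℝ) = Eprod B0 ks ε l :=
      EprodQ_cast B0 ks εq ε l (fun b hb => hcastε b (hb.trans l.isLt))
    show _ = ε l * ∑ j, Eprod B0 ks ε l (ks l) j * w j
    rw [Finset.mul_sum]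
    refine Finset.sum_congr rfl fun i _ => ?_
    have hentry : ((EprodQ B0 ks εq l (ks l) i : ℚ) : ℝ) = Eprod B0 ks ε l (ks l) i := by
      rw [← hcast]; rfl
    rw [Rat.cast_mul, hentry, hcastε l l.isLt]
    ring
  have hSinter : S = ⋂ l : Fin h, {w : Fin N → ℝ | 0 ≤ ∑ i, (a l i : ℝ) * w i} := by
    ext w
    simp only [Set.mem_iInter, Set.mem_setOf_eq, hSdef]
    constructor
    · intro hw l; rw [hhalf]; exact hw l l.isLt
    · intro hw ν hν; have := hw ⟨ν, hν⟩; rwa [hhalf] at this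
  refine ⟨⟨h, a, by rw [hclosureUS, hSinter]⟩, ?_⟩
  rw [hclosureUS]
  ext w
  simp only [Set.mem_inter_iff, Set.mem_neg, Set.mem_singleton_iff]
  constructor
  · rintro ⟨hw1, hw2⟩
    have hzero : ∀ ν < h, (Eprod B0 ks ε ν).mulVec w (ks ν) = 0 := by
      intro ν hν
      have h1 := hw1 ν hν
      have h2 := hw2 ν hν
      rw [Matrix.mulVec_neg] at h2
      simp only [Pi.neg_apply, mul_neg] at h2
      have hne : ε ν ≠ 0 := by rcases hε ν hν with he | he <;> rw [he] <;> norm_num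
      have hz : ε ν * (Eprod B0 ks ε ν).mulVec w (ks ν) = 0 :=
        le_antisymm (by linarith) h1
      rcases mul_eq_zero.mp hz with hc | hc
      · exact absurd hc hne
      · exact hc
    have hEq : ∀ ν ≤ h, muIter B0 ks ν w = (Eprod B0 ks ε ν).mulVec w := fun ν hν =>
      muIter_eq_Eprod B0 ks ε w ν (fun b hb => hε b (lt_of_lt_of_le hb hν))
        (fun b hb => le_of_eq (by rw [hzero b (lt_of_lt_of_le hb hν), mul_zero]))
    have hmu : ∀ ν, ν ≤ h → muIter B0 ks ν w = w := by
      intro ν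
      induction ν with
      | zero => intro _; rfl
      | succ ν ih =>
        intro hν
        have hν' : ν ≤ h := le_of_lt (Nat.lt_of_succ_le hν)
        have h0 : muIter B0 ks ν w (ks ν) = 0 := by
          rw [hEq ν hν']; exact hzero ν (Nat.lt_of_succ_le hν)
        rw [muIter_succ_of_zero B0 ks ν w h0, ih hν']
    funext i
    obtain ⟨ν, hν, hkν⟩ := hfull i
    have hw0 : w (ks ν) = 0 := by
      have h4 := hEq ν (le_of_lt hν)
      rw [hmu ν (le_of_lt hν)] at h4
      rw [congrFun h4 (ks ν)]
      exact hzero ν hν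
    rw [← hkν]
    simpa using hw0
  · rintro rfl
    have h0S : (0 : Fin N → ℝ) ∈ S := by
      intro ν hν
      rw [Matrix.mulVec_zero]
      simp
    exact ⟨h0S, by simpa using h0S⟩
end
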